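/- Let μ be a nonempty Young diagram with |μ| cells. Then the number of standard Young tableaux of shape μ, multiplied by the product of the hook lengths of all cells of μ, equals |μ|!. (This is the Hook Length Formula: #SYT(μ) = |μ|!/∏_{(i,j)∈μ} h(i,j).) -/

import Mathlib

/-- The hook length of the cell `(i, j)` (row `i`, column `j`, `0`-indexed) of a Young
diagram `μ`: `h(i,j) = (μ_i - j) + (μ'_j - i) - 1`. -/
def hookLen (μ : YoungDiagram) (i j : ℕ) : ℕ :=
  (μ.rowLen i - j) + (μ.colLen j - i) - 1

/-- The number of standard Young tableaux of shape `μ`: bijective fillings of the cells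
of `μ` with the numbers `1, …, |μ|` that increase along each row and down each column
(fillings are normalized to be `0` outside `μ`). -/
noncomputable def sytCount (μ : YoungDiagram) : ℕ :=
  Nat.card {f : ℕ → ℕ → ℕ //
    (∀ i j, (i, j) ∉ μ → f i j = 0) ∧
    Set.BijOn (fun c : ℕ × ℕ => f c.1 c.2) ↑μ.cells (Set.Icc 1 μ.card) ∧
    (∀ i j₁ j₂, j₁ < j₂ → (i, j₂) ∈ μ → f i j₁ < f i j₂) ∧
    (∀ i₁ i₂ j, i₁ < i₂ → (i₂, j) ∈ μ → f i₁ j < f i₂ j)}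

/-!
Frobenius' argument. Fix `m` at least the number of rows of `μ` and let `β_i = μ_i + m - 1 - i`.
In row `i` the hook lengths together with the differences `β_i - β_k` (`i < k < m`) are exactly
the numbers `1, …, β_i`, so `∏ hooks · ∏_{i<k} (β_i - β_k) = ∏ β_i!`. The largest entry of a
standard tableau sits at the end of a corner row `r`, and deleting it leaves a standard tableau of
`μ` minus that corner; this lowers `β_r` by one and so divides the hook product by
`w_r = β_r ∏_{k ≠ r} (β_r - β_k - 1) / (β_r - β_k)`. The weight `w_r` vanishes at rows that are
not corners, and `∑_r w_r = ∑ β_r - m(m-1)/2 = |μ|` by Lagrange interpolation, so `|μ|! / ∏ hooks`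
satisfies the same recursion as the number of standard tableaux.
-/

open Finset
open scoped Nat

namespace HookLength

section CornerSum

open Polynomial

variable {K ι : Type*} [Field K]

/-- Its value at `v r` is `-(v r * ∏ k ∈ s.erase r, (v r - v k - 1))` and its degree is `< #s`,
so Lagrange interpolation reads `sum_mul_prod_sub_one_div` off its coefficient of `X ^ (#s - 1)`. -/
noncomputable def cornerPoly (s : Finset ι) (v : ι → K) : K[X] :=
  X * ∏ k ∈ s, (X - C (v k + 1)) - (X - C (#s : K)) * ∏ k ∈ s, (X - C (v k))

lemma cornerPoly_singleton (a : ι) (v : ι → K) : cornerPoly {a} v = C (-v a) := by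
  simp only [cornerPoly, prod_singleton, card_singleton, Nat.cast_one, C_neg, C_add, C_1]
  ring

lemma cornerPoly_cons {a : ι} {s : Finset ι} (ha : a ∉ s) (v : ι → K) :
    cornerPoly (s.cons a ha) v = cornerPoly s v * (X - C (v a + 1))
      + C ((#s : K) - v a) * ∏ k ∈ s, (X - C (v k)) := by
  simp only [cornerPoly, prod_cons, card_cons, Nat.cast_succ, C_add, C_sub, C_1]
  ring

theorem cornerPoly_degree_lt_and_coeff {s : Finset ι} (hs : s.Nonempty) (v : ι → K) :
    (cornerPoly s v).degree < #s ∧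
      (cornerPoly s v).coeff (#s - 1) = ((#s).choose 2 : K) - ∑ i ∈ s, v i := by
  induction hs using Finset.Nonempty.cons_induction with
  | singleton a =>
    rw [cornerPoly_singleton, card_singleton]
    refine ⟨(degree_C_le).trans_lt (by norm_num), ?_⟩
    simp
  | cons a s ha hs ih =>
    obtain ⟨hdeg, hcoeff⟩ := ih
    rw [degree_lt_iff_coeff_zero] at hdeg ⊢
    have hmonic : (∏ k ∈ s, (X - C (v k))).Monic :=
      monic_prod_of_monic _ _ fun k _ => monic_X_sub_C _
    have hnat : (∏ k ∈ s, (X - C (v k))).natDegree = #s := by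
      rw [natDegree_prod_of_monic _ _ fun k _ => monic_X_sub_C _]; simp
    obtain ⟨j, hj⟩ : ∃ j, #s = j + 1 := ⟨#s - 1, by have := hs.card_pos; omega⟩
    rw [card_cons]
    refine ⟨fun n hn => ?_, ?_⟩
    · obtain ⟨n, rfl⟩ : ∃ n', n = n' + 1 := ⟨n - 1, by omega⟩
      rw [cornerPoly_cons, coeff_add, coeff_mul_X_sub_C, coeff_C_mul, hdeg n (by omega),
        hdeg (n + 1) (by omega), coeff_eq_zero_of_natDegree_lt (by omega)]
      ring
    · have hcoeff_j : (cornerPoly s v).coeff j = ((j + 1).choose 2 : K) - ∑ i ∈ s, v i := by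
        simpa [hj] using hcoeff
      rw [cornerPoly_cons, coeff_add, Nat.add_sub_cancel, hj, coeff_mul_X_sub_C, coeff_C_mul,
        hdeg (j + 1) hj.le, hcoeff_j, ← hj, ← hnat, hmonic.coeff_natDegree, hnat, sum_cons, hj,
        Nat.choose_succ_succ (j + 1), Nat.choose_one_right]
      push_cast
      ring

theorem sum_mul_prod_sub_one_div [DecidableEq ι] {s : Finset ι} {v : ι → K} (hv : Set.InjOn v s) :
    ∑ r ∈ s, v r * ∏ k ∈ s.erase r, (v r - v k - 1) / (v r - v k)
      = ∑ r ∈ s, v r - ((#s).choose 2 : K) := by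
  rcases s.eq_empty_or_nonempty with rfl | hs
  · simp
  obtain ⟨hdeg, hcoeff⟩ := cornerPoly_degree_lt_and_coeff hs v
  have heval : ∀ r ∈ s, (cornerPoly s v).eval (v r)
      = -(v r * ∏ k ∈ s.erase r, (v r - v k - 1)) := by
    intro r hr
    have hroot : (∏ k ∈ s, (X - C (v k))).eval (v r) = 0 := by
      rw [eval_prod]
      exact prod_eq_zero hr (by simp)
    rw [cornerPoly, eval_sub, eval_mul, eval_mul, hroot, mul_zero, sub_zero, eval_X, eval_prod,
      ← mul_prod_erase s _ hr]
    simp only [eval_sub, eval_X, eval_C, ← sub_sub]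
    ring
  rw [Lagrange.coeff_eq_sum hv hdeg, sum_congr rfl fun r hr => by rw [heval r hr]] at hcoeff
  simp only [neg_div, sum_neg_distrib, mul_div_assoc, ← prod_div_distrib] at hcoeff
  linear_combination -hcoeff

end CornerSum

section DiffProd

variable {R : Type*} [CommRing R] {m r : ℕ}

def diffProd (m : ℕ) (x : ℕ → R) : R := ∏ i ∈ range m, ∏ k ∈ Ioo i m, (x i - x k)

lemma prod_range_erase {M : Type*} [CommMonoid M] (f : ℕ → M) (hr : r < m) :
    ∏ k ∈ (range m).erase r, f k = (∏ k ∈ range r, f k) * ∏ k ∈ Ioo r m, f k := by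
  rw [← prod_union (disjoint_left.mpr fun k hk hk' => by simp at hk hk'; omega)]
  congr 1
  ext k
  simp only [mem_erase, mem_range, mem_union, mem_Ioo]
  omega

theorem diffProd_update_sub_one (x : ℕ → R) (hr : r < m) :
    diffProd m (Function.update x r (x r - 1)) * ∏ k ∈ (range m).erase r, (x r - x k)
      = diffProd m x * ∏ k ∈ (range m).erase r, (x r - x k - 1) := by
  set y := Function.update x r (x r - 1)
  have hy : ∀ k ≠ r, y k = x k := fun k hk => Function.update_of_ne hk _ _
  have hyr : y r = x r - 1 := Function.update_self _ _ _
  have hsplit (z : ℕ → R) : diffProd m z = (∏ i ∈ range r, ∏ k ∈ Ioo i m, (z i - z k))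
      * (∏ k ∈ Ioo r m, (z r - z k)) * ∏ i ∈ Ioo r m, ∏ k ∈ Ioo i m, (z i - z k) := by
    rw [diffProd, ← mul_prod_erase _ _ (mem_range.mpr hr), prod_range_erase _ hr]
    ring
  have hbelow : ∀ i ∈ range r, (∏ k ∈ Ioo i m, (y i - y k)) * (x r - x i)
      = (∏ k ∈ Ioo i m, (x i - x k)) * (x r - x i - 1) := by
    intro i hi
    have hir : i < r := mem_range.mp hi
    have hrest : ∏ k ∈ (Ioo i m).erase r, (y i - y k) = ∏ k ∈ (Ioo i m).erase r, (x i - x k) :=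
      prod_congr rfl fun k hk => by rw [hy i hir.ne, hy k (ne_of_mem_erase hk)]
    rw [← mul_prod_erase _ _ (mem_Ioo.mpr ⟨hir, hr⟩), ← mul_prod_erase _ _ (mem_Ioo.mpr ⟨hir, hr⟩),
      hrest, hy i hir.ne, hyr]
    ring
  have hat : ∏ k ∈ Ioo r m, (y r - y k) = ∏ k ∈ Ioo r m, (x r - x k - 1) :=
    prod_congr rfl fun k hk => by rw [hyr, hy k (mem_Ioo.mp hk).1.ne']; ring
  have habove : ∀ i ∈ Ioo r m, ∏ k ∈ Ioo i m, (y i - y k) = ∏ k ∈ Ioo i m, (x i - x k) :=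
    fun i hi => prod_congr rfl fun k hk => by
      rw [hy i (mem_Ioo.mp hi).1.ne', hy k ((mem_Ioo.mp hi).1.trans (mem_Ioo.mp hk).1).ne']
  have hbelow' := prod_congr rfl hbelow
  rw [prod_mul_distrib, prod_mul_distrib] at hbelow'
  rw [hsplit y, hsplit x, prod_range_erase _ hr, prod_range_erase _ hr, hat, prod_congr rfl habove]
  linear_combination (∏ k ∈ Ioo r m, (x r - x k - 1)) * (∏ k ∈ Ioo r m, (x r - x k))
    * (∏ i ∈ Ioo r m, ∏ k ∈ Ioo i m, (x i - x k)) * hbelow'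

end DiffProd

section HookProduct

variable {μ : YoungDiagram} {m i j k : ℕ}

def hookProd (μ : YoungDiagram) : ℕ := ∏ c ∈ μ.cells, hookLen μ c.1 c.2

/-- The β-numbers of `μ` with respect to `m ≥ μ.colLen 0` rows (meaningful for `i < m`); for
`m = μ.colLen 0` they are the hook lengths of the first column. -/
def beta (μ : YoungDiagram) (m i : ℕ) : ℕ := μ.rowLen i + (m - 1 - i)

lemma mem_cells_iff_of_colLen_le (hm : μ.colLen 0 ≤ m) (c : ℕ × ℕ) :
    c ∈ μ.cells ↔ c.1 ∈ range m ∧ c.2 ∈ range (μ.rowLen c.1) := by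
  rw [YoungDiagram.mem_cells, mem_range, mem_range, ← YoungDiagram.mem_iff_lt_rowLen,
    and_iff_right_of_imp]
  intro hc
  have := μ.colLen_anti 0 c.2 (Nat.zero_le _)
  have := YoungDiagram.mem_iff_lt_colLen.mp hc
  omega

lemma card_eq_sum_rowLen (hm : μ.colLen 0 ≤ m) : μ.card = ∑ i ∈ range m, μ.rowLen i := by
  rw [YoungDiagram.card, card_eq_sum_ones,
    sum_finset_product _ _ (fun i => range (μ.rowLen i)) (mem_cells_iff_of_colLen_le hm)]
  simp

lemma hookLen_add (hj : j < μ.rowLen i) :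
    hookLen μ i j + (i + j + 1) = μ.rowLen i + μ.colLen j := by
  have := YoungDiagram.mem_iff_lt_colLen.mp (YoungDiagram.mem_iff_lt_rowLen.mpr hj)
  unfold hookLen
  omega

lemma hookLen_pos (hj : j < μ.rowLen i) : 0 < hookLen μ i j := by
  have := YoungDiagram.mem_iff_lt_colLen.mp (YoungDiagram.mem_iff_lt_rowLen.mpr hj)
  unfold hookLen
  omega

lemma hookLen_strictAntiOn : StrictAntiOn (hookLen μ i) (Set.Iio (μ.rowLen i)) := by
  intro j₁ hj₁ j₂ hj₂ h12
  have := hookLen_add (μ := μ) hj₁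
  have := hookLen_add (μ := μ) hj₂
  have := μ.colLen_anti j₁ j₂ h12.le
  omega

lemma beta_strictAntiOn : StrictAntiOn (beta μ m) (Set.Iio m) := by
  intro i hi k hk hik
  have := μ.rowLen_anti i k hik.le
  simp only [Set.mem_Iio] at hi hk
  unfold beta
  omega

lemma hookLen_le_beta (hm : μ.colLen 0 ≤ m) (hj : j < μ.rowLen i) : hookLen μ i j ≤ beta μ m i := by
  have := hookLen_add hj
  have := μ.colLen_anti 0 j (Nat.zero_le _)
  unfold beta
  omega

/-- Either row `k` reaches column `j`, and then `β_i - β_k` is smaller than the hook, or it does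
not, and then `β_i - β_k` is larger. -/
lemma hookLen_ne_beta_sub (hj : j < μ.rowLen i) (hik : i < k) (hk : k < m) :
    hookLen μ i j ≠ beta μ m i - beta μ m k := by
  have hhook := hookLen_add hj
  have := μ.rowLen_anti i k hik.le
  have hcol : k < μ.colLen j ↔ j < μ.rowLen k := by
    rw [← YoungDiagram.mem_iff_lt_colLen, YoungDiagram.mem_iff_lt_rowLen]
  unfold beta
  by_cases hkj : j < μ.rowLen k <;> [have := hcol.mpr hkj; have := mt hcol.mp hkj] <;> omega

/-- The hook lengths of row `i` and the differences `β_i - β_k` (`i < k < m`) are together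
exactly the numbers `1, …, β_i`. -/
theorem prod_hookLen_mul_prod_beta_sub (hm : μ.colLen 0 ≤ m) (hi : i < m) :
    (∏ j ∈ range (μ.rowLen i), hookLen μ i j) * ∏ k ∈ Ioo i m, (beta μ m i - beta μ m k)
      = (beta μ m i)! := by
  have hinjA : Set.InjOn (hookLen μ i) (range (μ.rowLen i)) := by
    rw [coe_range]; exact hookLen_strictAntiOn.injOn
  have hlt : ∀ k ∈ Ioo i m, beta μ m k < beta μ m i := fun k hk =>
    beta_strictAntiOn (Set.mem_Iio.mpr hi) (Set.mem_Iio.mpr (mem_Ioo.mp hk).2) (mem_Ioo.mp hk).1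
  have hinjB : Set.InjOn (fun k => beta μ m i - beta μ m k) (Ioo i m) := by
    intro k₁ hk₁ k₂ hk₂ h
    have := hlt k₁ hk₁
    have := hlt k₂ hk₂
    exact (beta_strictAntiOn (μ := μ)).injOn (Set.mem_Iio.mpr (mem_Ioo.mp hk₁).2)
      (Set.mem_Iio.mpr (mem_Ioo.mp hk₂).2) (by simp only at h; omega)
  set A := (range (μ.rowLen i)).image (hookLen μ i)
  set B := (Ioo i m).image fun k => beta μ m i - beta μ m k
  have hdisj : Disjoint A B := by
    simp only [A, B, disjoint_left, mem_image, mem_range, mem_Ioo, not_exists, not_and]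
    rintro _ ⟨j, hj, rfl⟩ k ⟨hik, hk⟩ h
    exact hookLen_ne_beta_sub hj hik hk h.symm
  have hunion : A ∪ B = Icc 1 (beta μ m i) := by
    refine eq_of_subset_of_card_le (union_subset ?_ ?_) ?_
    · simp only [A, subset_iff, mem_image, mem_range, mem_Icc]
      rintro _ ⟨j, hj, rfl⟩
      exact ⟨hookLen_pos hj, hookLen_le_beta hm hj⟩
    · simp only [B, subset_iff, mem_image, mem_Icc]
      rintro _ ⟨k, hk, rfl⟩
      have := hlt k hk
      omega
    · rw [card_union_of_disjoint hdisj, card_image_of_injOn hinjA, card_image_of_injOn hinjB,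
        card_range, Nat.card_Ioo, Nat.card_Icc, beta]
      omega
  calc _ = ∏ a ∈ A ∪ B, a := by rw [prod_union hdisj, prod_image hinjA, prod_image hinjB]
    _ = (beta μ m i)! := by
      rw [hunion, ← Ico_add_one_right_eq_Icc, prod_Ico_id_eq_factorial]

theorem hookProd_mul_prod_beta_sub (hm : μ.colLen 0 ≤ m) :
    hookProd μ * ∏ i ∈ range m, ∏ k ∈ Ioo i m, (beta μ m i - beta μ m k)
      = ∏ i ∈ range m, (beta μ m i)! := by
  rw [hookProd, prod_finset_product _ _ (fun i => range (μ.rowLen i))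
    (mem_cells_iff_of_colLen_le hm), ← prod_mul_distrib]
  exact prod_congr rfl fun i hi => prod_hookLen_mul_prod_beta_sub hm (mem_range.mp hi)

end HookProduct

section Corners

variable {μ : YoungDiagram} {r : ℕ}

def corners (μ : YoungDiagram) : Finset ℕ :=
  (range (μ.colLen 0)).filter fun r => μ.rowLen (r + 1) < μ.rowLen r

lemma mem_corners : r ∈ corners μ ↔ μ.rowLen (r + 1) < μ.rowLen r := by
  rw [corners, mem_filter, mem_range, and_iff_right_iff_imp, ← YoungDiagram.mem_iff_lt_colLen,
    YoungDiagram.mem_iff_lt_rowLen]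
  omega

lemma corners_subset : corners μ ⊆ range (μ.colLen 0) := filter_subset _ _

lemma corner_mem (hr : r ∈ corners μ) : (r, μ.rowLen r - 1) ∈ μ :=
  YoungDiagram.mem_iff_lt_rowLen.mpr (by have := mem_corners.mp hr; omega)

lemma not_corner_lt (hr : r ∈ corners μ) {d : ℕ × ℕ} (hd : d ∈ μ) :
    ¬ (r, μ.rowLen r - 1) < d := by
  have hr := mem_corners.mp hr
  have hdj := YoungDiagram.mem_iff_lt_rowLen.mp hd
  have := μ.rowLen_anti r d.1
  have := μ.rowLen_anti (r + 1) d.1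
  rw [Prod.lt_iff]
  omega

lemma mem_corners_of_forall_not_lt {c : ℕ × ℕ} (hc : c ∈ μ) (hmax : ∀ d ∈ μ, ¬ c < d) :
    c.1 ∈ corners μ ∧ c = (c.1, μ.rowLen c.1 - 1) := by
  have hright := mt (hmax (c.1, c.2 + 1)) (by simp [Prod.lt_iff])
  have hdown := mt (hmax (c.1 + 1, c.2)) (by simp [Prod.lt_iff])
  rw [YoungDiagram.mem_iff_lt_rowLen] at hright hdown
  have := YoungDiagram.mem_iff_lt_rowLen.mp hc
  exact ⟨mem_corners.mpr (by omega), Prod.ext rfl (by simp; omega)⟩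

def carve (μ : YoungDiagram) (r : ℕ) : YoungDiagram :=
  if hr : r ∈ corners μ then
    { cells := μ.cells.erase (r, μ.rowLen r - 1)
      isLowerSet := fun a b hba ha => by
        simp only [coe_erase, Set.mem_sdiff, Set.mem_singleton_iff, mem_coe] at ha ⊢
        refine ⟨μ.isLowerSet hba ha.1, fun hb => not_corner_lt hr ha.1 ?_⟩
        exact hb ▸ lt_of_le_of_ne hba (fun h => ha.2 (h ▸ hb)) }
  else μ

lemma carve_cells (hr : r ∈ corners μ) :
    (carve μ r).cells = μ.cells.erase (r, μ.rowLen r - 1) := by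
  rw [carve, dif_pos hr]

lemma mem_carve (hr : r ∈ corners μ) {d : ℕ × ℕ} :
    d ∈ carve μ r ↔ d ∈ μ ∧ d ≠ (r, μ.rowLen r - 1) := by
  rw [← YoungDiagram.mem_cells, carve_cells hr, mem_erase, YoungDiagram.mem_cells, and_comm]

lemma carve_card (hr : r ∈ corners μ) : (carve μ r).card = μ.card - 1 := by
  rw [YoungDiagram.card, carve_cells hr, card_erase_of_mem ((μ.mem_cells _).mpr (corner_mem hr))]

lemma carve_rowLen (hr : r ∈ corners μ) (i : ℕ) :
    (carve μ r).rowLen i = if i = r then μ.rowLen r - 1 else μ.rowLen i := by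
  have hrow : (carve μ r).row i = (μ.row i).erase (r, μ.rowLen r - 1) := by
    rw [YoungDiagram.row, YoungDiagram.row, carve_cells hr, filter_erase]
  rw [YoungDiagram.rowLen_eq_card, YoungDiagram.rowLen_eq_card, hrow]
  split_ifs with hir
  · subst hir
    rw [card_erase_of_mem (YoungDiagram.mem_row_iff.mpr ⟨corner_mem hr, rfl⟩),
      ← YoungDiagram.rowLen_eq_card]
  · rw [erase_eq_of_notMem fun h => hir (YoungDiagram.mem_row_iff.mp h).2.symm,
      ← YoungDiagram.rowLen_eq_card]

end Corners

section Tableaux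

variable {μ : YoungDiagram} {r : ℕ} {f : ℕ → ℕ → ℕ}

def IsSYT (μ : YoungDiagram) (f : ℕ → ℕ → ℕ) : Prop :=
  (∀ i j, (i, j) ∉ μ → f i j = 0) ∧
  Set.BijOn (fun c : ℕ × ℕ => f c.1 c.2) ↑μ.cells (Set.Icc 1 μ.card) ∧
  (∀ i j₁ j₂, j₁ < j₂ → (i, j₂) ∈ μ → f i j₁ < f i j₂) ∧
  (∀ i₁ i₂ j, i₁ < i₂ → (i₂, j) ∈ μ → f i₁ j < f i₂ j)

lemma sytCount_eq (μ : YoungDiagram) : sytCount μ = Nat.card {f // IsSYT μ f} := rfl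

instance (μ : YoungDiagram) : Finite {f // IsSYT μ f} := by
  refine Finite.of_injective (β := μ.cells → Fin (μ.card + 1))
    (fun f c => ⟨f.1 c.1.1 c.1.2, Nat.lt_succ_of_le (f.2.2.1.mapsTo c.2).2⟩) fun f g hfg => ?_
  ext i j
  by_cases hij : (i, j) ∈ μ
  · exact congrArg Fin.val (congrFun hfg ⟨(i, j), hij⟩)
  · rw [f.2.1 i j hij, g.2.1 i j hij]

lemma isSYT_iff : IsSYT μ f ↔ (∀ i j, (i, j) ∉ μ → f i j = 0) ∧
    Set.BijOn (fun c : ℕ × ℕ => f c.1 c.2) ↑μ.cells (Set.Icc 1 μ.card) ∧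
    ∀ a b : ℕ × ℕ, a < b → b ∈ μ → f a.1 a.2 < f b.1 b.2 := by
  refine and_congr_right' (and_congr_right' ⟨fun ⟨hrow, hcol⟩ ⟨i₁, j₁⟩ ⟨i₂, j₂⟩ hab hb => ?_,
    fun h => ?_⟩)
  · rcases Prod.lt_iff.mp hab with ⟨hi, hj⟩ | ⟨hi, hj⟩
    · rcases hj.eq_or_lt with rfl | hj
      · exact hcol _ _ _ hi hb
      · exact (hrow _ _ _ hj (μ.up_left_mem hi.le le_rfl hb)).trans (hcol _ _ _ hi hb)
    · rcases hi.eq_or_lt with rfl | hi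
      · exact hrow _ _ _ hj hb
      · exact (hrow _ _ _ hj (μ.up_left_mem hi.le le_rfl hb)).trans (hcol _ _ _ hi hb)
  · exact ⟨fun i j₁ j₂ hj => h (i, j₁) (i, j₂) (Prod.lt_iff.mpr (.inr ⟨le_rfl, hj⟩)),
      fun i₁ i₂ j hi => h (i₁, j) (i₂, j) (Prod.lt_iff.mpr (.inl ⟨hi, le_rfl⟩))⟩

def setCell (f : ℕ → ℕ → ℕ) (c : ℕ × ℕ) (a : ℕ) : ℕ → ℕ → ℕ :=
  fun i j => if (i, j) = c then a else f i j

lemma setCell_apply_self (f : ℕ → ℕ → ℕ) (c : ℕ × ℕ) (a : ℕ) : setCell f c a c.1 c.2 = a :=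
  if_pos rfl

lemma setCell_apply_of_ne {c d : ℕ × ℕ} (a : ℕ) (h : d ≠ c) : setCell f c a d.1 d.2 = f d.1 d.2 :=
  if_neg h

lemma setCell_setCell (f : ℕ → ℕ → ℕ) (c : ℕ × ℕ) (a b : ℕ) :
    setCell (setCell f c a) c b = setCell f c b := by
  ext i j
  simp only [setCell]
  split_ifs <;> rfl

lemma setCell_eq_self {c : ℕ × ℕ} {a : ℕ} (h : f c.1 c.2 = a) : setCell f c a = f := by
  ext i j
  simp only [setCell]
  split_ifs with hij
  · rw [← h, ← hij]
  · rfl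

lemma bijOn_carve_iff (hr : r ∈ corners μ) (hf : f r (μ.rowLen r - 1) = μ.card) :
    Set.BijOn (fun d : ℕ × ℕ => f d.1 d.2) ↑μ.cells (Set.Icc 1 μ.card) ↔
      Set.BijOn (fun d : ℕ × ℕ => setCell f (r, μ.rowLen r - 1) 0 d.1 d.2) ↑(carve μ r).cells
        (Set.Icc 1 (carve μ r).card) := by
  set c : ℕ × ℕ := (r, μ.rowLen r - 1)
  have hfc : f c.1 c.2 = μ.card := hf
  have hcells : (↑μ.cells : Set (ℕ × ℕ)) = insert c ↑(carve μ r).cells := by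
    rw [carve_cells hr, coe_erase, Set.insert_sdiff_singleton,
      Set.insert_eq_of_mem ((μ.mem_cells c).mpr (corner_mem hr))]
  have hIcc : Set.Icc 1 μ.card = insert (f c.1 c.2) (Set.Icc 1 (carve μ r).card) := by
    have : 1 ≤ μ.card := card_pos.mpr ⟨c, corner_mem hr⟩
    ext k
    simp only [hfc, carve_card hr, Set.mem_Icc, Set.mem_insert_iff]
    omega
  have hcν : c ∉ ((carve μ r).cells : Set (ℕ × ℕ)) := fun h => ((mem_carve hr).mp h).2 rfl
  rw [hcells, hIcc, Set.BijOn.insert_iff hcν (by simp [hfc, carve_card hr])]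
  exact Set.EqOn.bijOn_iff fun d hd => (setCell_apply_of_ne 0 ((mem_carve hr).mp hd).2).symm

theorem isSYT_carve_iff (hr : r ∈ corners μ) (hf : f r (μ.rowLen r - 1) = μ.card) :
    IsSYT μ f ↔ IsSYT (carve μ r) (setCell f (r, μ.rowLen r - 1) 0) := by
  set c : ℕ × ℕ := (r, μ.rowLen r - 1)
  have hc : c ∈ μ := corner_mem hr
  have hmem (d : ℕ × ℕ) : d ∈ carve μ r ↔ d ∈ μ ∧ d ≠ c := mem_carve hr
  have hfc : f c.1 c.2 = μ.card := hf
  have hzero : (∀ i j, (i, j) ∉ μ → f i j = 0) ↔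
      ∀ i j, (i, j) ∉ carve μ r → setCell f c 0 i j = 0 := by
    refine ⟨fun h i j hij => ?_, fun h i j hij => ?_⟩
    · by_cases hijc : (i, j) = c
      · exact if_pos hijc
      · exact (setCell_apply_of_ne 0 hijc).trans (h i j fun h' => hij ((hmem _).mpr ⟨h', hijc⟩))
    · have hijc : (i, j) ≠ c := fun h' => hij (h' ▸ hc)
      exact (setCell_apply_of_ne 0 hijc).symm.trans (h i j fun h' => hij ((hmem _).mp h').1)
  rw [isSYT_iff, isSYT_iff, hzero, bijOn_carve_iff hr hf]
  refine and_congr_right' (and_congr_right fun hbij' => ?_)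
  have hbijμ := (bijOn_carve_iff hr hf).mpr hbij'
  have hne {a b : ℕ × ℕ} (hab : a < b) (hb : b ∈ μ) : a ≠ c := fun h =>
    not_corner_lt hr hb (show c < b from h ▸ hab)
  refine ⟨fun h a b hab hb => ?_, fun h a b hab hb => ?_⟩
  · obtain ⟨hbμ, hbc⟩ := (hmem b).mp hb
    rw [setCell_apply_of_ne 0 (hne hab hbμ), setCell_apply_of_ne 0 hbc]
    exact h a b hab hbμ
  · have haμ : a ∈ μ := μ.isLowerSet hab.le hb
    by_cases hbc : b = c
    · have hne' : f a.1 a.2 ≠ f c.1 c.2 := fun h => hne hab hb (hbijμ.injOn haμ hc h)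
      rw [hbc]
      exact lt_of_le_of_ne ((hbijμ.mapsTo haμ).2.trans_eq hfc.symm) hne'
    · have := h a b hab ((hmem b).mpr ⟨hb, hbc⟩)
      rwa [setCell_apply_of_ne 0 (hne hab hb), setCell_apply_of_ne 0 hbc] at this

lemma IsSYT.setCell_corner_zero {g : ℕ → ℕ → ℕ} (hr : r ∈ corners μ) (hg : IsSYT (carve μ r) g) :
    setCell g (r, μ.rowLen r - 1) 0 = g :=
  setCell_eq_self (hg.1 _ _ fun h => ((mem_carve hr).mp h).2 rfl)

lemma IsSYT.setCell_corner {g : ℕ → ℕ → ℕ} (hr : r ∈ corners μ) (hg : IsSYT (carve μ r) g) :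
    IsSYT μ (setCell g (r, μ.rowLen r - 1) μ.card) := by
  rwa [isSYT_carve_iff hr (setCell_apply_self _ _ _), setCell_setCell, hg.setCell_corner_zero hr]

lemma sytCount_of_card_eq_zero (h : μ.card = 0) : sytCount μ = 1 := by
  have hμ : ∀ c, c ∉ μ := fun c hc => notMem_empty c (card_eq_zero.mp h ▸ (μ.mem_cells c).mpr hc)
  have hzero : IsSYT μ fun _ _ => 0 :=
    ⟨fun _ _ _ => rfl, by simp [h, card_eq_zero.mp h], fun _ _ _ _ h => (hμ _ h).elim,
      fun _ _ _ _ h => (hμ _ h).elim⟩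
  refine Nat.card_eq_one_iff_unique.mpr ⟨⟨fun f g => ?_⟩, ⟨⟨_, hzero⟩⟩⟩
  ext i j
  rw [f.2.1 i j (hμ _), g.2.1 i j (hμ _)]

theorem sytCount_eq_sum_corners (hμ : 0 < μ.card) :
    sytCount μ = ∑ r ∈ corners μ, sytCount (carve μ r) := by
  let Φ : (Σ r : corners μ, {g // IsSYT (carve μ r) g}) → {f // IsSYT μ f} :=
    fun p => ⟨_, p.2.2.setCell_corner p.1.2⟩
  have hΦ : Function.Bijective Φ := by
    refine ⟨fun ⟨⟨r, hr⟩, g⟩ ⟨⟨t, ht⟩, h⟩ heq => ?_, fun ⟨f, hf⟩ => ?_⟩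
    · have heq' : setCell g.1 (r, μ.rowLen r - 1) μ.card
          = setCell h.1 (t, μ.rowLen t - 1) μ.card := congrArg Subtype.val heq
      have hrt : r = t := by
        have hval : setCell g.1 (r, μ.rowLen r - 1) μ.card t (μ.rowLen t - 1) = μ.card := by
          rw [heq']; exact setCell_apply_self _ _ _
        exact congrArg Prod.fst ((g.2.setCell_corner hr).2.1.injOn (corner_mem hr) (corner_mem ht)
          ((setCell_apply_self _ _ _).trans hval.symm))
      subst hrt
      obtain rfl : g = h := Subtype.ext <| calc
        g.1 = setCell (setCell g.1 (r, μ.rowLen r - 1) μ.card) (r, μ.rowLen r - 1) 0 := by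
          rw [setCell_setCell, g.2.setCell_corner_zero hr]
        _ = h.1 := by rw [heq', setCell_setCell, h.2.setCell_corner_zero hr]
      rfl
    · obtain ⟨c, hc, hfc⟩ := hf.2.1.surjOn (Set.mem_Icc.mpr ⟨hμ, le_rfl⟩)
      have hmax : ∀ d ∈ μ, ¬ c < d := fun d hd hcd =>
        absurd ((isSYT_iff.mp hf).2.2 c d hcd hd)
          (not_lt.mpr ((hf.2.1.mapsTo hd).2.trans_eq hfc.symm))
      obtain ⟨hr, hc'⟩ := mem_corners_of_forall_not_lt hc hmax
      rw [hc'] at hfc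
      refine ⟨⟨⟨c.1, hr⟩, _, (isSYT_carve_iff hr hfc).mp hf⟩, Subtype.ext ?_⟩
      exact (setCell_setCell _ _ _ _).trans (setCell_eq_self hfc)
  rw [sytCount_eq, ← Nat.card_eq_of_bijective Φ hΦ, Nat.card_sigma]
  exact sum_coe_sort (corners μ) fun r => sytCount (carve μ r)

end Tableaux

section Formula

variable {μ : YoungDiagram} {m r : ℕ}

lemma hookProd_mul_diffProd (hm : μ.colLen 0 ≤ m) :
    (hookProd μ : ℚ) * diffProd m (fun i => (beta μ m i : ℚ))
      = ∏ i ∈ range m, ((beta μ m i)! : ℚ) := by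
  rw [← Nat.cast_prod, ← hookProd_mul_prod_beta_sub hm, Nat.cast_mul, Nat.cast_prod, diffProd]
  congr 1
  refine prod_congr rfl fun i hi => ?_
  rw [Nat.cast_prod]
  refine prod_congr rfl fun k hk => (Nat.cast_sub ?_).symm
  exact (beta_strictAntiOn (Set.mem_Iio.mpr (mem_range.mp hi)) (Set.mem_Iio.mpr (mem_Ioo.mp hk).2)
    (mem_Ioo.mp hk).1).le

lemma beta_injOn : Set.InjOn (fun i => (beta μ m i : ℚ)) (range m) := by
  rw [coe_range]
  exact fun i hi k hk h => beta_strictAntiOn.injOn hi hk (Nat.cast_injective h)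

lemma one_le_beta (hr : r ∈ corners μ) : 1 ≤ beta μ m r := by
  have := mem_corners.mp hr
  unfold beta
  omega

lemma beta_carve (hr : r ∈ corners μ) :
    beta (carve μ r) m = Function.update (beta μ m) r (beta μ m r - 1) := by
  ext i
  rcases eq_or_ne i r with rfl | hi
  · have := mem_corners.mp hr
    rw [Function.update_self, beta, beta, carve_rowLen hr, if_pos rfl]
    omega
  · rw [Function.update_of_ne hi, beta, beta, carve_rowLen hr, if_neg hi]

lemma cast_beta_carve (hr : r ∈ corners μ) :
    (fun i => (beta (carve μ r) m i : ℚ)) =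
      Function.update (fun i => (beta μ m i : ℚ)) r (beta μ m r - 1) := by
  ext i
  rw [beta_carve hr]
  rcases eq_or_ne i r with rfl | hi
  · rw [Function.update_self, Function.update_self, Nat.cast_sub (one_le_beta hr), Nat.cast_one]
  · rw [Function.update_of_ne hi, Function.update_of_ne hi]

lemma prod_factorial_beta_carve (hr : r ∈ corners μ) (hrm : r < m) :
    ∏ i ∈ range m, (beta μ m i)! = beta μ m r * ∏ i ∈ range m, (beta (carve μ r) m i)! := by
  rw [← mul_prod_erase _ _ (mem_range.mpr hrm), ← mul_prod_erase _ _ (mem_range.mpr hrm),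
    beta_carve hr, Function.update_self, ← mul_assoc,
    Nat.mul_factorial_pred (Nat.one_le_iff_ne_zero.mp (one_le_beta hr))]
  congr 1
  exact prod_congr rfl fun i hi => by rw [Function.update_of_ne (ne_of_mem_erase hi)]

noncomputable def cornerWeight (μ : YoungDiagram) (m r : ℕ) : ℚ :=
  beta μ m r *
    ∏ k ∈ (range m).erase r, ((beta μ m r : ℚ) - beta μ m k - 1) / (beta μ m r - beta μ m k)

theorem hookProd_eq_hookProd_carve_mul (hm : μ.colLen 0 ≤ m) (hr : r ∈ corners μ) :
    (hookProd μ : ℚ) = hookProd (carve μ r) * cornerWeight μ m r := by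
  have hrm : r < m := (mem_range.mp (corners_subset hr)).trans_le hm
  have hmν : (carve μ r).colLen 0 ≤ m := by
    rw [← not_lt, ← YoungDiagram.mem_iff_lt_colLen, mem_carve hr, YoungDiagram.mem_iff_lt_colLen]
    omega
  have hμ := hookProd_mul_diffProd hm
  have hν := hookProd_mul_diffProd hmν
  have hfact : (∏ i ∈ range m, ((beta μ m i)! : ℚ))
      = beta μ m r * ∏ i ∈ range m, ((beta (carve μ r) m i)! : ℚ) := by
    exact_mod_cast prod_factorial_beta_carve hr hrm
  rw [cast_beta_carve hr] at hν
  set x : ℕ → ℚ := fun i => (beta μ m i : ℚ)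
  have hΔ : diffProd m x ≠ 0 := fun h => by
    rw [h, mul_zero, eq_comm, prod_eq_zero_iff] at hμ
    obtain ⟨i, -, hi⟩ := hμ
    exact Nat.cast_ne_zero.mpr (Nat.factorial_ne_zero _) hi
  have hE : ∏ k ∈ (range m).erase r, (x r - x k) ≠ 0 :=
    prod_ne_zero_iff.mpr fun k hk => sub_ne_zero.mpr fun h =>
      (ne_of_mem_erase hk) (beta_injOn (μ := μ) (mem_range.mpr hrm) (mem_of_mem_erase hk) h).symm
  have hratio := diffProd_update_sub_one x hrm
  rw [cornerWeight, prod_div_distrib, ← mul_div_assoc, ← mul_div_assoc, eq_div_iff hE]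
  refine mul_right_cancel₀ hΔ ?_
  -- `H(μ) Δ(β) = ∏ β! = β_r ∏ β'! = β_r H(μ') Δ(β')`, and `Δ(β') ∏ (β_r - β_k)` equals
  -- `Δ(β) ∏ (β_r - β_k - 1)`
  linear_combination (∏ k ∈ (range m).erase r, (x r - x k)) * (hμ + hfact - x r * hν)
    + x r * hookProd (carve μ r) * hratio

lemma sum_beta (hm : μ.colLen 0 ≤ m) : ∑ i ∈ range m, beta μ m i = μ.card + m.choose 2 := by
  simp only [beta, sum_add_distrib]
  rw [← card_eq_sum_rowLen hm, sum_range_reflect (fun i => i) m, sum_range_id, Nat.choose_two_right]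

lemma sum_cornerWeight (hm : μ.colLen 0 ≤ m) : ∑ r ∈ range m, cornerWeight μ m r = μ.card := by
  rw [sum_congr rfl fun r _ => cornerWeight.eq_def μ m r, sum_mul_prod_sub_one_div beta_injOn,
    card_range, ← Nat.cast_sum, sum_beta hm]
  push_cast
  ring

lemma cornerWeight_eq_zero_of_notMem_corners (hr : r < μ.colLen 0) (hr' : r ∉ corners μ) :
    cornerWeight μ (μ.colLen 0) r = 0 := by
  rw [cornerWeight]
  have hpos : 0 < μ.rowLen r := by
    rw [← YoungDiagram.mem_iff_lt_rowLen, YoungDiagram.mem_iff_lt_colLen]; exact hr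
  have hrow : μ.rowLen (r + 1) = μ.rowLen r :=
    le_antisymm (μ.rowLen_anti _ _ r.le_succ) (not_lt.mp (mt mem_corners.mpr hr'))
  have hr1 : r + 1 < μ.colLen 0 := by
    rw [← YoungDiagram.mem_iff_lt_colLen, YoungDiagram.mem_iff_lt_rowLen]; omega
  have hbeta : beta μ (μ.colLen 0) r = beta μ (μ.colLen 0) (r + 1) + 1 := by
    unfold beta
    omega
  refine mul_eq_zero_of_right _ (prod_eq_zero (i := r + 1) (by simp [hr1]) ?_)
  rw [div_eq_zero_iff, hbeta]
  left
  push_cast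
  ring

end Formula

theorem sytCount_mul_hookProd (μ : YoungDiagram) : sytCount μ * hookProd μ = μ.card ! := by
  induction h : μ.card using Nat.strong_induction_on generalizing μ with
  | _ n ih =>
  rcases n.eq_zero_or_pos with rfl | hn
  · rw [sytCount_of_card_eq_zero h, hookProd, card_eq_zero.mp h]
    rfl
  set m := μ.colLen 0
  have hterm : ∀ r ∈ corners μ,
      (sytCount (carve μ r) * hookProd μ : ℚ) = (n - 1)! * cornerWeight μ m r := by
    intro r hr
    have hν := ih (n - 1) (by omega) (carve μ r) (by rw [carve_card hr, h])
    rw [hookProd_eq_hookProd_carve_mul le_rfl hr, ← mul_assoc, ← Nat.cast_mul, hν]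
  have hsum : ∑ r ∈ corners μ, cornerWeight μ m r = n := by
    rw [sum_subset corners_subset fun r hr hr' =>
      cornerWeight_eq_zero_of_notMem_corners (mem_range.mp hr) hr', sum_cornerWeight le_rfl, h]
  have hq : (sytCount μ * hookProd μ : ℚ) = n ! := by
    rw [sytCount_eq_sum_corners (h ▸ hn), Nat.cast_sum, sum_mul, sum_congr rfl hterm, ← mul_sum,
      hsum, ← Nat.mul_factorial_pred hn.ne', Nat.cast_mul, mul_comm]
  exact_mod_cast hq

end HookLength

theorem statement16_general (μ : YoungDiagram) :
    sytCount μ * ∏ c ∈ μ.cells, hookLen μ c.1 c.2 = Nat.factorial μ.card :=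
  HookLength.sytCount_mul_hookProd μ

/-- The Hook Length Formula: for a nonempty Young diagram `μ`, the number of standard
Young tableaux of shape `μ` times the product of all hook lengths equals `|μ|!`. -/
theorem statement16 (μ : YoungDiagram) (hμ : μ ≠ ⊥) :
    sytCount μ * ∏ c ∈ μ.cells, hookLen μ c.1 c.2 = Nat.factorial μ.card :=
  statement16_general μ
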